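/- Let γ₁, γ₂ be two (not necessarily distinct) stationary or periodic orbits contained in ω(u), under the abstract axioms (A1)–(A5). Then there exists k ∈ ℤ such that W(p¹, p²) = k for all p¹ ∈ γ₁, p² ∈ γ₂ with p¹ ≠ p². In particular W(p¹,p²) is well-defined (i.e. (p¹,p²) ∉ Σ) for all such pairs. -/

import Mathlib

open Filter Topology Set

/-!
A pair of points on two periodic orbits never lies in `Σ` off the diagonal. Indeed, `W` is
non-increasing along the product flow and drops strictly at a crossing of `Σ`; but two periods
`T₁, T₂` have arbitrarily large common almost-periods `N T₁ ≈ l T₂` (Dirichlet), after which the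
pair comes back close to where it was just before the crossing, and there `W` is locally constant,
so `W` would have recovered its value from before the drop. Consequently `W` is defined and, being
integer valued, constant along the product flow, so `W(φˢ p¹, φᵗ p²) = W(φˢ⁻ᵗ p¹, p²)`. Finally
`γ₁ \ {p²}` is connected (a periodic orbit is a point or a circle), so `W(·, p²)` is constant on it.
-/

namespace Flow

variable {X : Type*} [TopologicalSpace X] (ϕ : Flow ℝ X)

def periods (x : X) : AddSubgroup ℝ where
  carrier := {t | ϕ t x = x}
  add_mem' {s t} hs ht := by
    simp only [mem_ofPred_eq] at *
    rw [ϕ.map_add, ht, hs]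
  zero_mem' := ϕ.map_zero_apply x
  neg_mem' {t} ht := by
    simp only [mem_ofPred_eq] at *
    conv_lhs => rw [← ht, ← ϕ.map_add, neg_add_cancel, ϕ.map_zero_apply]

@[simp]
theorem mem_periods {x : X} {t : ℝ} : t ∈ ϕ.periods x ↔ ϕ t x = x := Iff.rfl

theorem periods_map (t : ℝ) (x : X) : ϕ.periods (ϕ t x) = ϕ.periods x := by
  ext s
  rw [mem_periods, mem_periods, ← ϕ.map_add, add_comm, ϕ.map_add]
  exact (ϕ.toHomeomorph t).injective.eq_iff

theorem map_eq_map_iff_sub_mem_periods {x : X} {s t : ℝ} :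
    ϕ s x = ϕ t x ↔ s - t ∈ ϕ.periods x := by
  rw [← ϕ.periods_map t, mem_periods, ← ϕ.map_add, sub_add_cancel]

theorem continuous_prodMk_map (x y : X) : Continuous fun t => (ϕ t x, ϕ t y) :=
  (ϕ.continuous continuous_id continuous_const).prodMk (ϕ.continuous continuous_id continuous_const)

theorem isClosed_periods [T1Space X] (x : X) : IsClosed (ϕ.periods x : Set ℝ) :=
  isClosed_singleton.preimage (ϕ.continuous continuous_id continuous_const)

theorem periods_eq_top_or_eq_zmultiples [T1Space X] {x : X} {T : ℝ} (hT : T ∈ ϕ.periods x)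
    (hT0 : T ≠ 0) : ϕ.periods x = ⊤ ∨ ∃ a > 0, ϕ.periods x = AddSubgroup.zmultiples a := by
  rcases (ϕ.periods x).dense_or_cyclic with hdense | ⟨a, ha⟩
  · left
    rw [← AddSubgroup.coe_eq_univ, ← (ϕ.isClosed_periods x).closure_eq, hdense.closure_eq]
  · rw [← AddSubgroup.zmultiples_eq_closure] at ha
    refine .inr ⟨|a|, abs_pos.2 ?_, by rw [zmultiples_abs, ha]⟩
    rintro rfl
    simp [ha, hT0] at hT

theorem map_eq_map_iff_toIcoMod_eq {x : X} {a : ℝ} (ha : 0 < a)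
    (hx : ϕ.periods x = AddSubgroup.zmultiples a) (c s t : ℝ) :
    ϕ s x = ϕ t x ↔ toIcoMod ha c s = toIcoMod ha c t := by
  rw [toIcoMod_eq_toIcoMod, map_eq_map_iff_sub_mem_periods, hx, ← neg_sub,
    AddSubgroup.neg_mem_iff, AddSubgroup.mem_zmultiples_iff]
  simp only [eq_comm]

theorem isPreconnected_orbit_diff_singleton [T1Space X] {x : X} {T : ℝ} (hT : T ∈ ϕ.periods x)
    (hT0 : T ≠ 0) (y : X) : IsPreconnected (orbit ϕ x \ {y}) := by
  have hcont : Continuous fun t => ϕ t x := ϕ.continuous continuous_id continuous_const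
  rw [orbit_eq_range]
  by_cases hy : y ∈ range fun t => ϕ t x
  swap
  · rw [sdiff_singleton_eq_self hy]
    exact isPreconnected_range hcont
  obtain ⟨c, rfl⟩ := hy
  rcases ϕ.periods_eq_top_or_eq_zmultiples hT hT0 with htop | ⟨a, ha, hx⟩
  · have hfix : ∀ t, ϕ t x = x := fun t => (ϕ.mem_periods).1 (htop ▸ AddSubgroup.mem_top t)
    convert isPreconnected_empty
    rw [sdiff_eq_empty]
    rintro _ ⟨t, rfl⟩
    exact (hfix t).trans (hfix c).symm
  have hIco : ∀ t ∈ Ico c (c + a), toIcoMod ha c t = t := fun t ht => (toIcoMod_eq_self ha).2 ht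
  have hc : toIcoMod ha c c = c := hIco c ⟨le_rfl, lt_add_of_pos_right c ha⟩
  suffices (range fun t => ϕ t x) \ {ϕ c x} = (fun t => ϕ t x) '' Ioo c (c + a) from
    this ▸ isPreconnected_Ioo.image _ hcont.continuousOn
  ext z
  constructor
  · rintro ⟨⟨t, rfl⟩, hne⟩
    have hmem := toIcoMod_mem_Ico ha c t
    refine ⟨toIcoMod ha c t, ⟨lt_of_le_of_ne hmem.1 fun h => hne ?_, hmem.2⟩, ?_⟩
    · rw [mem_singleton_iff, ϕ.map_eq_map_iff_toIcoMod_eq ha hx c, hc, ← h]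
    · exact (ϕ.map_eq_map_iff_toIcoMod_eq ha hx c _ _).2 (hIco _ hmem)
  · rintro ⟨t, ht, rfl⟩
    refine ⟨⟨t, rfl⟩, fun h => ht.1.ne' ?_⟩
    rwa [mem_singleton_iff, ϕ.map_eq_map_iff_toIcoMod_eq ha hx c, hc,
      hIco t (Ioo_subset_Ico_self ht)] at h

end Flow

theorem exists_int_mul_sub_int_mul_lt {T₁ T₂ : ℝ} (hT₁ : 0 < T₁) (hT₂ : 0 < T₂) (M : ℝ) {ε : ℝ}
    (hε : 0 < ε) : ∃ N l : ℤ, M ≤ N * T₁ ∧ |N * T₁ - l * T₂| < ε := by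
  obtain ⟨m, hm⟩ := exists_nat_ge (M / T₁)
  obtain ⟨n, hn⟩ := exists_nat_gt (m * T₂ / ε)
  have hn0 : 0 < n := by
    have : 0 ≤ (m : ℝ) * T₂ / ε := by positivity
    exact_mod_cast this.trans_lt hn
  obtain ⟨j, k, hk, -, hjk⟩ := Real.exists_int_int_abs_mul_sub_le (T₁ / T₂) hn0
  refine ⟨m * k, m * j, ?_, ?_⟩
  · have hk1 : (1 : ℝ) ≤ k := by exact_mod_cast hk
    calc M ≤ m * T₁ := (div_le_iff₀ hT₁).1 hm
      _ ≤ m * T₁ * k := le_mul_of_one_le_right (by positivity) hk1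
      _ = ((m * k : ℤ) : ℝ) * T₁ := by push_cast; ring
  · have hrw : ((m * k : ℤ) : ℝ) * T₁ - ((m * j : ℤ) : ℝ) * T₂ = m * T₂ * (k * (T₁ / T₂) - j) := by
      push_cast; field_simp
    rw [hrw, abs_mul, abs_of_nonneg (by positivity : (0 : ℝ) ≤ m * T₂)]
    calc (m : ℝ) * T₂ * |k * (T₁ / T₂) - j| ≤ m * T₂ * (1 / (n + 1)) := by gcongr
      _ < ε := by
        rw [mul_one_div, div_lt_iff₀ (by positivity)]
        rw [div_lt_iff₀ hε] at hn
        nlinarith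

theorem antitoneOn_of_dense_of_forall_exists {α : Type*} [Preorder α] {f : ℝ → α} {G : Set ℝ}
    (hG : Dense G) (hloc : ∀ x, ∃ δ > 0, AntitoneOn f (G ∩ Ioo (x - δ) (x + δ))) :
    AntitoneOn f G := by
  intro a ha b hb hab
  by_contra hba
  -- `s` is the set of `y` with `f τ ≤ f a` for all `τ ∈ G ∩ [a, y)`, written so as to be closed.
  set s := {y : ℝ | ∀ τ ∈ G, a ≤ τ → ¬f τ ≤ f a → y ≤ τ}
  have hs : IsClosed s := by
    simp only [s, ofPred_forall]
    exact isClosed_iInter fun τ => isClosed_iInter fun _ => isClosed_iInter fun _ =>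
      isClosed_iInter fun _ => isClosed_Iic
  have hsub : Icc a (b + 1) ⊆ s := by
    refine (hs.inter isClosed_Icc).Icc_subset_of_forall_mem_nhdsWithin (fun τ _ haτ _ => haτ) ?_
    rintro x ⟨hx, hax, -⟩
    obtain ⟨δ, hδ, hanti⟩ := hloc x
    obtain ⟨m, hmG, ham, hδm, hmx, hma⟩ : ∃ m ∈ G, a ≤ m ∧ x - δ < m ∧ m ≤ x ∧ f m ≤ f a := by
      rcases hax.eq_or_lt with rfl | hax
      · exact ⟨a, ha, le_rfl, by linarith, le_rfl, le_rfl⟩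
      obtain ⟨m, hmG, hm⟩ := hG.exists_between (max_lt hax (sub_lt_self x hδ))
      refine ⟨m, hmG, (le_max_left _ _).trans hm.1.le, (le_max_right _ _).trans_lt hm.1, hm.2.le,
        ?_⟩
      by_contra h
      exact (hx m hmG ((le_max_left _ _).trans hm.1.le) h).not_gt hm.2
    filter_upwards [Ioo_mem_nhdsGT (lt_add_of_pos_right x hδ)] with y hy τ hτG haτ hτa
    by_contra! hτy
    rcases lt_or_ge τ x with hτx | hxτ
    · exact (hx τ hτG haτ hτa).not_gt hτx
    · exact hτa ((hanti ⟨hmG, hδm, by linarith⟩ ⟨hτG, by linarith, hτy.trans hy.2⟩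
        (hmx.trans hxτ)).trans hma)
  have := hsub ⟨hab.trans (by linarith), le_rfl⟩ b hb hab hba
  linarith

/-- The axioms (A1), (A4), (A5), with `S` the set `Σ` off which `W` is defined. -/
structure IsZeroNumber {X : Type*} [TopologicalSpace X] (ϕ : Flow ℝ X) (S : Set (X × X))
    (W : X → X → ℤ) : Prop where
  isClosed : IsClosed S
  continuousOn : ContinuousOn (fun q : X × X => W q.1 q.2) Sᶜ
  exits : ∀ u v : X, (u, v) ∈ S → u ≠ v →
    ∃ ε > (0 : ℝ), ∀ σ : ℝ, σ ≠ 0 → |σ| < ε → (ϕ σ u, ϕ σ v) ∉ S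
  drops : ∀ u v : X, (u, v) ∈ S → u ≠ v →
    ∃ ε > (0 : ℝ), ∀ σ σ' : ℝ, -ε < σ → σ < 0 → 0 < σ' → σ' < ε →
      W (ϕ σ' u) (ϕ σ' v) < W (ϕ σ u) (ϕ σ v)

namespace IsZeroNumber

variable {X : Type*} [TopologicalSpace X] {ϕ : Flow ℝ X} {S : Set (X × X)} {W : X → X → ℤ}
  {q₁ q₂ : X} {T₁ T₂ : ℝ}

theorem continuousOn_comp_map (hW : IsZeroNumber ϕ S W) :
    ContinuousOn (fun σ => W (ϕ σ q₁) (ϕ σ q₂)) {σ | (ϕ σ q₁, ϕ σ q₂) ∉ S} :=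
  hW.continuousOn.comp (ϕ.continuous_prodMk_map q₁ q₂).continuousOn fun _ h => h

theorem apply_map_map_eq_of_isPreconnected (hW : IsZeroNumber ϕ S W) {I : Set ℝ}
    (hI : IsPreconnected I) (hIS : ∀ σ ∈ I, (ϕ σ q₁, ϕ σ q₂) ∉ S) {τ τ' : ℝ} (hτ : τ ∈ I)
    (hτ' : τ' ∈ I) : W (ϕ τ q₁) (ϕ τ q₂) = W (ϕ τ' q₁) (ϕ τ' q₂) :=
  hI.constant (hW.continuousOn_comp_map.mono hIS) hτ hτ'

theorem exists_antitoneOn_Ioo_of_mem (hW : IsZeroNumber ϕ S W) (hq : q₁ ≠ q₂) {σ₀ : ℝ}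
    (h₀ : (ϕ σ₀ q₁, ϕ σ₀ q₂) ∈ S) :
    ∃ δ > 0, (∀ τ ∈ Ioo (σ₀ - δ) (σ₀ + δ), τ ≠ σ₀ → (ϕ τ q₁, ϕ τ q₂) ∉ S) ∧
      AntitoneOn (fun σ => W (ϕ σ q₁) (ϕ σ q₂))
        ({σ | (ϕ σ q₁, ϕ σ q₂) ∉ S} ∩ Ioo (σ₀ - δ) (σ₀ + δ)) := by
  have hne : ϕ σ₀ q₁ ≠ ϕ σ₀ q₂ := fun h => hq ((ϕ.toHomeomorph σ₀).injective h)
  obtain ⟨ε₄, hε₄, hexit⟩ := hW.exits _ _ h₀ hne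
  obtain ⟨ε₅, hε₅, hdrop⟩ := hW.drops _ _ h₀ hne
  have hshift : ∀ τ q, ϕ (τ - σ₀) (ϕ σ₀ q) = ϕ τ q := fun τ q => by
    rw [← ϕ.map_add, sub_add_cancel]
  set δ := min ε₄ ε₅
  have hδ : 0 < δ := lt_min hε₄ hε₅
  have hpunct : ∀ τ ∈ Ioo (σ₀ - δ) (σ₀ + δ), τ ≠ σ₀ → (ϕ τ q₁, ϕ τ q₂) ∉ S := fun τ hτ hτσ₀ => by
    have h := hexit (τ - σ₀) (sub_ne_zero.2 hτσ₀) (abs_sub_lt_iff.2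
      ⟨by linarith [hτ.2, min_le_left ε₄ ε₅], by linarith [hτ.1, min_le_left ε₄ ε₅]⟩)
    rwa [hshift, hshift] at h
  refine ⟨δ, hδ, hpunct, ?_⟩
  rintro τ ⟨hτS, hτ⟩ τ' ⟨hτ'S, hτ'⟩ hle
  have hτσ₀ : τ ≠ σ₀ := by rintro rfl; exact hτS h₀
  have hτ'σ₀ : τ' ≠ σ₀ := by rintro rfl; exact hτ'S h₀
  rcases hτ'σ₀.lt_or_gt with hτ'lt | hτ'gt
  · refine (hW.apply_map_map_eq_of_isPreconnected isPreconnected_Ioo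
      (fun σ hσ => hpunct σ ⟨hσ.1, by linarith [hσ.2]⟩ hσ.2.ne)
      (show τ ∈ Ioo (σ₀ - δ) σ₀ from ⟨hτ.1, hle.trans_lt hτ'lt⟩) ⟨hτ'.1, hτ'lt⟩).ge
  rcases hτσ₀.lt_or_gt with hτlt | hτgt
  · have h := hdrop (τ - σ₀) (τ' - σ₀) (by linarith [hτ.1, min_le_right ε₄ ε₅]) (by linarith)
      (by linarith) (by linarith [hτ'.2, min_le_right ε₄ ε₅])
    simp only [hshift] at h
    exact h.le
  · refine (hW.apply_map_map_eq_of_isPreconnected isPreconnected_Ioo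
      (fun σ hσ => hpunct σ ⟨by linarith [hσ.1], hσ.2⟩ hσ.1.ne')
      (show τ ∈ Ioo σ₀ (σ₀ + δ) from ⟨hτgt, hτ.2⟩) ⟨hτgt.trans_le hle, hτ'.2⟩).ge

theorem exists_antitoneOn_Ioo (hW : IsZeroNumber ϕ S W) (hq : q₁ ≠ q₂) (σ₀ : ℝ) :
    ∃ δ > 0, (∀ τ ∈ Ioo (σ₀ - δ) (σ₀ + δ), τ ≠ σ₀ → (ϕ τ q₁, ϕ τ q₂) ∉ S) ∧
      AntitoneOn (fun σ => W (ϕ σ q₁) (ϕ σ q₂))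
        ({σ | (ϕ σ q₁, ϕ σ q₂) ∉ S} ∩ Ioo (σ₀ - δ) (σ₀ + δ)) := by
  by_cases h₀ : (ϕ σ₀ q₁, ϕ σ₀ q₂) ∈ S
  · exact hW.exists_antitoneOn_Ioo_of_mem hq h₀
  have hopen : IsOpen {σ | (ϕ σ q₁, ϕ σ q₂) ∉ S} :=
    hW.isClosed.isOpen_compl.preimage (ϕ.continuous_prodMk_map q₁ q₂)
  obtain ⟨δ, hδ, hball⟩ := Metric.isOpen_iff.1 hopen σ₀ h₀
  rw [Real.ball_eq_Ioo] at hball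
  refine ⟨δ, hδ, fun τ hτ _ => hball hτ, fun τ hτ τ' hτ' _ => ?_⟩
  exact (hW.apply_map_map_eq_of_isPreconnected isPreconnected_Ioo hball hτ.2 hτ'.2).ge

theorem antitoneOn (hW : IsZeroNumber ϕ S W) (hq : q₁ ≠ q₂) :
    AntitoneOn (fun σ => W (ϕ σ q₁) (ϕ σ q₂)) {σ | (ϕ σ q₁, ϕ σ q₂) ∉ S} := by
  refine antitoneOn_of_dense_of_forall_exists ?_
    fun σ₀ => (hW.exists_antitoneOn_Ioo hq σ₀).imp fun δ ⟨hδ, _, hanti⟩ => ⟨hδ, hanti⟩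
  refine dense_of_exists_between fun a b hab => ?_
  obtain ⟨δ, hδ, hpunct, -⟩ := hW.exists_antitoneOn_Ioo hq a
  refine ⟨a + min δ (b - a) / 2, hpunct _ ⟨?_, ?_⟩ ?_, ?_, ?_⟩ <;>
    linarith [min_le_left δ (b - a), min_le_right δ (b - a), lt_min hδ (sub_pos.2 hab)]

theorem notMem_of_mem_periods (hW : IsZeroNumber ϕ S W) (hT₁ : 0 < T₁) (hT₂ : 0 < T₂)
    (h₁ : T₁ ∈ ϕ.periods q₁) (h₂ : T₂ ∈ ϕ.periods q₂) (hq : q₁ ≠ q₂) : (q₁, q₂) ∉ S := by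
  intro hS
  obtain ⟨ε₄, hε₄, hexit⟩ := hW.exits _ _ hS hq
  obtain ⟨ε₅, hε₅, hdrop⟩ := hW.drops _ _ hS hq
  obtain ⟨η, hη, hη₄, hη₅⟩ : ∃ η > 0, η < ε₄ ∧ η < ε₅ :=
    ⟨min ε₄ ε₅ / 2, by positivity, by linarith [min_le_left ε₄ ε₅, lt_min hε₄ hε₅],
      by linarith [min_le_right ε₄ ε₅, lt_min hε₄ hε₅]⟩
  have hbefore := hexit (-η) (neg_ne_zero.2 hη.ne') (by rwa [abs_neg, abs_of_pos hη])
  have hafter := hexit η hη.ne' (by rwa [abs_of_pos hη])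
  set O := {q : X × X | q ∉ S ∧ W q.1 q.2 = W (ϕ (-η) q₁) (ϕ (-η) q₂)}
  have hO : IsOpen O :=
    hW.continuousOn.isOpen_inter_preimage hW.isClosed.isOpen_compl (isOpen_discrete {_})
  have hnear : ∀ᶠ d in 𝓝 (0 : ℝ), (ϕ (-η) q₁, ϕ (d - η) q₂) ∈ O := by
    have hc : Continuous fun d : ℝ => (ϕ (-η) q₁, ϕ (d - η) q₂) :=
      continuous_const.prodMk (ϕ.continuous (continuous_sub_right η) continuous_const)
    have h0 : O ∈ 𝓝 (ϕ (-η) q₁, ϕ (-η) q₂) := hO.mem_nhds ⟨hbefore, rfl⟩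
    exact hc.continuousAt.preimage_mem_nhds (by simpa only [zero_sub] using h0)
  obtain ⟨ε, hε, hball⟩ := Metric.eventually_nhds_iff.1 hnear
  -- A common almost-period `N T₁ ≈ l T₂` brings the pair back into `O` at time `N T₁ - η`.
  obtain ⟨N, l, hLη, hLl⟩ := exists_int_mul_sub_int_mul_lt hT₁ hT₂ (2 * η) hε
  have hN : ϕ (N * T₁) q₁ = q₁ := by simpa [zsmul_eq_mul] using zsmul_mem h₁ N
  have hl : ϕ (l * T₂) q₂ = q₂ := by simpa [zsmul_eq_mul] using zsmul_mem h₂ l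
  have hreturn : (ϕ (N * T₁ - η) q₁, ϕ (N * T₁ - η) q₂) ∈ O := by
    have e₁ : ϕ (N * T₁ - η) q₁ = ϕ (-η) q₁ := by rw [sub_eq_neg_add, ϕ.map_add, hN]
    have e₂ : ϕ (N * T₁ - η) q₂ = ϕ (N * T₁ - l * T₂ - η) q₂ := by
      rw [show N * T₁ - η = N * T₁ - l * T₂ - η + l * T₂ by ring, ϕ.map_add, hl]
    rw [e₁, e₂]
    exact hball (by rwa [Real.dist_0_eq_abs])
  have hmono := hW.antitoneOn hq hafter hreturn.1 (by linarith)
  have hjump := hdrop (-η) η (by linarith) (by linarith) hη hη₅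
  simp only [hreturn.2] at hmono
  omega

theorem apply_map_map_of_mem_periods (hW : IsZeroNumber ϕ S W) (hT₁ : 0 < T₁) (hT₂ : 0 < T₂)
    (h₁ : T₁ ∈ ϕ.periods q₁) (h₂ : T₂ ∈ ϕ.periods q₂) (hq : q₁ ≠ q₂) (σ : ℝ) :
    W (ϕ σ q₁) (ϕ σ q₂) = W q₁ q₂ := by
  have hG : ∀ τ, (ϕ τ q₁, ϕ τ q₂) ∉ S := fun τ =>
    hW.notMem_of_mem_periods hT₁ hT₂ (by rwa [ϕ.periods_map]) (by rwa [ϕ.periods_map])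
      fun h => hq ((ϕ.toHomeomorph τ).injective h)
  simpa only [ϕ.map_zero_apply] using
    hW.apply_map_map_eq_of_isPreconnected isPreconnected_univ (fun τ _ => hG τ) (mem_univ σ)
      (mem_univ 0)

end IsZeroNumber

theorem stmt_14_general {X : Type*} [TopologicalSpace X] [T2Space X]
    (φ : ℝ → X → X)
    (hφc : Continuous fun p : ℝ × X => φ p.1 p.2)
    (hφ0 : ∀ x, φ 0 x = x)
    (hφadd : ∀ σ σ' x, φ (σ + σ') x = φ σ (φ σ' x))
    (S : Set (X × X)) (hScl : IsClosed S)
    (W : X → X → ℤ)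
    -- (A1)
    (hWc : ContinuousOn (fun q : X × X => W q.1 q.2) Sᶜ)
    -- (A4)
    (hA4 : ∀ u v : X, (u, v) ∈ S → u ≠ v →
      ∃ ε > (0 : ℝ), ∀ σ : ℝ, σ ≠ 0 → |σ| < ε → (φ σ u, φ σ v) ∉ S)
    -- (A5)
    (hA5 : ∀ u v : X, (u, v) ∈ S → u ≠ v →
      ∃ ε > (0 : ℝ), ∀ σ σ' : ℝ, -ε < σ → σ < 0 → 0 < σ' → σ' < ε →
        W (φ σ' u) (φ σ' v) < W (φ σ u) (φ σ v))
    (u p₁ p₂ : X) (T₁ T₂ : ℝ) (hT₁ : 0 < T₁) (hT₂ : 0 < T₂)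
    (hper₁ : φ T₁ p₁ = p₁) (hper₂ : φ T₂ p₂ = p₂) :
    ∃ k : ℤ, ∀ q₁ ∈ {x : X | ∃ σ : ℝ, x = φ σ p₁},
      ∀ q₂ ∈ {x : X | ∃ σ : ℝ, x = φ σ p₂},
        q₁ ≠ q₂ → (q₁, q₂) ∉ S ∧ W q₁ q₂ = k := by
  let ϕ : Flow ℝ X := ⟨φ, hφc, hφadd, hφ0⟩
  have hW : IsZeroNumber ϕ S W := ⟨hScl, hWc, hA4, hA5⟩
  have h₁ : T₁ ∈ ϕ.periods p₁ := hper₁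
  have h₂ : T₂ ∈ ϕ.periods p₂ := hper₂
  have h₁' : ∀ s, T₁ ∈ ϕ.periods (ϕ s p₁) := fun s => by rwa [ϕ.periods_map]
  have h₂' : ∀ t, T₂ ∈ ϕ.periods (ϕ t p₂) := fun t => by rwa [ϕ.periods_map]
  have hnotMem : ∀ s t, ϕ s p₁ ≠ ϕ t p₂ → (ϕ s p₁, ϕ t p₂) ∉ S := fun s t =>
    hW.notMem_of_mem_periods hT₁ hT₂ (h₁' s) (h₂' t)
  have hcont : ContinuousOn (fun x => W x p₂) (ϕ.orbit p₁ \ {p₂}) := by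
    refine hW.continuousOn.comp (continuous_id.prodMk continuous_const).continuousOn ?_
    rintro x ⟨hx, hxp₂⟩
    obtain ⟨s, rfl⟩ := ϕ.mem_orbit_iff.1 hx
    have h := hnotMem s 0 (by rwa [ϕ.map_zero_apply])
    rwa [ϕ.map_zero_apply] at h
  obtain ⟨k, -, hk⟩ := (ϕ.isPreconnected_orbit_diff_singleton h₁ hT₁.ne' p₂).eqOn_const_of_mapsTo
    (isDiscrete_univ_iff.2 inferInstance) hcont (mapsTo_univ _ _) univ_nonempty
  refine ⟨k, ?_⟩
  rintro _ ⟨s, rfl⟩ _ ⟨t, rfl⟩ hne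
  have hreduce : W (ϕ s p₁) (ϕ t p₂) = W (ϕ (-t + s) p₁) p₂ := by
    rw [← hW.apply_map_map_of_mem_periods hT₁ hT₂ (h₁' s) (h₂' t) hne (-t), ← ϕ.map_add,
      ← ϕ.map_add, neg_add_cancel, ϕ.map_zero_apply]
  refine ⟨hnotMem s t hne, hreduce.trans (hk ⟨ϕ.mem_orbit p₁ _, fun h => hne ?_⟩)⟩
  show ϕ s p₁ = ϕ t p₂
  rw [← h, ← ϕ.map_add, add_neg_cancel_left]

/-- under axioms (A1)–(A5), for two (not necessarily distinct)
stationary or periodic orbits γ₁, γ₂ ⊆ ω(u), there is k ∈ ℤ such that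
(p¹,p²) ∉ Σ and W(p¹, p²) = k for all p¹ ∈ γ₁, p² ∈ γ₂ with p¹ ≠ p². -/
theorem stmt_14 {X : Type*} [TopologicalSpace X] [CompactSpace X] [T2Space X]
    (φ : ℝ → X → X)
    (hφc : Continuous fun p : ℝ × X => φ p.1 p.2)
    (hφ0 : ∀ x, φ 0 x = x)
    (hφadd : ∀ σ σ' x, φ (σ + σ') x = φ σ (φ σ' x))
    (S : Set (X × X)) (hScl : IsClosed S)
    (hΔS : ∀ x : X, (x, x) ∈ S)
    (W : X → X → ℤ)
    -- (A1)
    (hWc : ContinuousOn (fun q : X × X => W q.1 q.2) Sᶜ)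
    (hWsym : ∀ u v : X, (u, v) ∉ S → W u v = W v u)
    -- (A2), (A3)
    (π : X → ℝ × ℝ) (hπc : Continuous π)
    (hA3 : ∀ u v : X, π u = π v → (u, v) ∈ S)
    -- (A4)
    (hA4 : ∀ u v : X, (u, v) ∈ S → u ≠ v →
      ∃ ε > (0 : ℝ), ∀ σ : ℝ, σ ≠ 0 → |σ| < ε → (φ σ u, φ σ v) ∉ S)
    -- (A5)
    (hA5 : ∀ u v : X, (u, v) ∈ S → u ≠ v →
      ∃ ε > (0 : ℝ), ∀ σ σ' : ℝ, -ε < σ → σ < 0 → 0 < σ' → σ' < ε →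
        W (φ σ' u) (φ σ' v) < W (φ σ u) (φ σ v))
    (u p₁ p₂ : X) (T₁ T₂ : ℝ) (hT₁ : 0 < T₁) (hT₂ : 0 < T₂)
    (hper₁ : φ T₁ p₁ = p₁) (hper₂ : φ T₂ p₂ = p₂)
    (hγ₁ : {x : X | ∃ σ : ℝ, x = φ σ p₁} ⊆
      {w : X | ∃ σs : ℕ → ℝ, Tendsto σs atTop atTop ∧
        Tendsto (fun n => φ (σs n) u) atTop (nhds w)})
    (hγ₂ : {x : X | ∃ σ : ℝ, x = φ σ p₂} ⊆
      {w : X | ∃ σs : ℕ → ℝ, Tendsto σs atTop atTop ∧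
        Tendsto (fun n => φ (σs n) u) atTop (nhds w)}) :
    ∃ k : ℤ, ∀ q₁ ∈ {x : X | ∃ σ : ℝ, x = φ σ p₁},
      ∀ q₂ ∈ {x : X | ∃ σ : ℝ, x = φ σ p₂},
        q₁ ≠ q₂ → (q₁, q₂) ∉ S ∧ W q₁ q₂ = k :=
  stmt_14_general φ hφc hφ0 hφadd S hScl W hWc hA4 hA5 u p₁ p₂ T₁ T₂ hT₁ hT₂ hper₁ hper₂
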